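/- arXiv:2304.10473 — 11 statements merged into one kernel-verified Lean document; each statement's English description precedes it below -/
import Mathlib

section
/- Second Dini theorem: let (f_n) be a sequence of antitone (or monotone) real functions on [a,b] converging pointwise to a continuous function f; then f_n → f uniformly on [a,b]. (The f_n need not be continuous.) -/
open Filter Set

theorem second_dini_theorem
    (a b : ℝ) (hab : a < b) (f : ℕ → ℝ → ℝ) (flim : ℝ → ℝ)
    (hanti : ∀ n, AntitoneOn (f n) (Set.Icc a b))
    (hcont : ContinuousOn flim (Set.Icc a b))
    (hptws : ∀ x ∈ Set.Icc a b,
      Tendsto (fun n => f n x) atTop (nhds (flim x))) :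
    TendstoUniformlyOn f flim atTop (Set.Icc a b) := by
  rw [Metric.tendstoUniformlyOn_iff]
  intro ε hε
  have hε4 : 0 < ε / 4 := by linarith
  have key : ∀ x ∈ Icc a b, ∃ δ > 0, ∀ y ∈ Icc a b, |y - x| < δ → |flim y - flim x| < ε / 4 := by
    intro x hx
    have := hcont x hx
    rw [Metric.continuousWithinAt_iff] at this
    obtain ⟨δ, hδ, h⟩ := this (ε / 4) hε4
    refine ⟨δ, hδ, fun y hy hyd => ?_⟩
    have := h (x := y) hy (by rwa [Real.dist_eq])
    rwa [Real.dist_eq] at this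
  choose! δ hδpos hδ using key
  obtain ⟨t, hts, hcov⟩ := (isCompact_Icc (a := a) (b := b)).elim_nhds_subcover
    (fun x => Metric.ball x (δ x / 2))
    (fun x hx => Metric.ball_mem_nhds x (by linarith [hδpos x hx]))
  have memu : ∀ x ∈ Icc a b, max a (x - δ x / 2) ∈ Icc a b := by
    intro x hx
    exact ⟨le_max_left _ _, max_le (le_of_lt hab) (by linarith [hx.2, hδpos x hx])⟩
  have memv : ∀ x ∈ Icc a b, min b (x + δ x / 2) ∈ Icc a b := by
    intro x hx
    exact ⟨le_min (le_of_lt hab) (by linarith [hx.1, hδpos x hx]), min_le_left _ _⟩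
  have hev : ∀ᶠ n in atTop, ∀ x ∈ t,
      dist (f n (max a (x - δ x / 2))) (flim (max a (x - δ x / 2))) < ε / 4 ∧
      dist (f n (min b (x + δ x / 2))) (flim (min b (x + δ x / 2))) < ε / 4 := by
    rw [eventually_all_finset]
    intro x hx
    have hxI : x ∈ Icc a b := hts x hx
    have h1 : ∀ᶠ n in atTop,
        dist (f n (max a (x - δ x / 2))) (flim (max a (x - δ x / 2))) < ε / 4 := by
      have := (hptws _ (memu x hxI)) (Metric.ball_mem_nhds _ hε4)
      simpa [Metric.mem_ball] using this
    have h2 : ∀ᶠ n in atTop,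
        dist (f n (min b (x + δ x / 2))) (flim (min b (x + δ x / 2))) < ε / 4 := by
      have := (hptws _ (memv x hxI)) (Metric.ball_mem_nhds _ hε4)
      simpa [Metric.mem_ball] using this
    exact h1.and h2
  filter_upwards [hev] with n hn x hx
  obtain ⟨c, hct, hxc⟩ := Set.mem_iUnion₂.mp (hcov hx)
  have hcI : c ∈ Icc a b := hts c hct
  have hxcd : |x - c| < δ c / 2 := by
    rw [Metric.mem_ball, Real.dist_eq] at hxc
    exact hxc
  have hδc : 0 < δ c := hδpos c hcI
  set u := max a (c - δ c / 2) with hu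
  set v := min b (c + δ c / 2) with hv
  have huI : u ∈ Icc a b := memu c hcI
  have hvI : v ∈ Icc a b := memv c hcI
  have hux : u ≤ x := max_le hx.1 (by cases abs_lt.mp hxcd with | intro h1 h2 => linarith)
  have hxv : x ≤ v := le_min hx.2 (by cases abs_lt.mp hxcd with | intro h1 h2 => linarith)
  -- antitone sandwich
  have hfu : f n x ≤ f n u := hanti n huI hx hux
  have hfv : f n v ≤ f n x := hanti n hx hvI hxv
  -- closeness of flim at u, v, x to flim c
  have hucd : |u - c| < δ c := by
    have h1 : c - δ c / 2 ≤ u := le_max_right _ _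
    have h2 : u ≤ c := max_le hcI.1 (by linarith)
    rw [abs_lt]; constructor <;> linarith
  have hvcd : |v - c| < δ c := by
    have h1 : v ≤ c + δ c / 2 := min_le_right _ _
    have h2 : c ≤ v := le_min hcI.2 (by linarith)
    rw [abs_lt]; constructor <;> linarith
  have hxcd' : |x - c| < δ c := lt_trans hxcd (by linarith)
  have h1 := abs_lt.mp (hδ c hcI u huI hucd)
  have h2 := abs_lt.mp (hδ c hcI v hvI hvcd)
  have h3 := abs_lt.mp (hδ c hcI x hx hxcd')
  obtain ⟨hnu, hnv⟩ := hn c hct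
  rw [Real.dist_eq] at hnu hnv
  have h4 := abs_lt.mp hnu
  have h5 := abs_lt.mp hnv
  rw [Real.dist_eq, abs_lt]
  constructor <;> linarith
end

section
/- Let Z_n → Z pointwise, with Z_n, Z nonnegative decreasing continuous on [0,T], and fix θ > 0. Suppose x_n = g_θ(Z_n) and x = g_θ(Z) exist in (0,T], i.e. ∫_0^{x_n} Z_n(s)ds = θ x_n² and ∫_0^x Z(s)ds = θ x². Then x_n → x. -/
open Filter Set intervalIntegral MeasureTheory

lemma my_avg_mono (T : ℝ) (Y : ℝ → ℝ)
    (hc : ContinuousOn Y (Set.Icc 0 T)) (ha : AntitoneOn Y (Set.Icc 0 T))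
    (s t : ℝ) (hs : 0 < s) (hst : s ≤ t) (htT : t ≤ T) :
    s * ∫ u in (0:ℝ)..t, Y u ≤ t * ∫ u in (0:ℝ)..s, Y u := by
  have hsub1 : Set.uIcc (0:ℝ) s ⊆ Set.Icc 0 T := by
    rw [Set.uIcc_of_le hs.le]; exact Set.Icc_subset_Icc le_rfl (hst.trans htT)
  have hsub2 : Set.uIcc s t ⊆ Set.Icc 0 T := by
    rw [Set.uIcc_of_le hst]; exact Set.Icc_subset_Icc hs.le htT
  have hi1 : IntervalIntegrable Y volume 0 s := (hc.mono hsub1).intervalIntegrable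
  have hi2 : IntervalIntegrable Y volume s t := (hc.mono hsub2).intervalIntegrable
  have hsmem : s ∈ Set.Icc (0:ℝ) T := ⟨hs.le, hst.trans htT⟩
  have h1 : (∫ u in s..t, Y u) ≤ (t - s) * Y s := by
    have : (∫ u in s..t, Y u) ≤ ∫ u in s..t, Y s := by
      apply intervalIntegral.integral_mono_on hst hi2 intervalIntegrable_const
      intro u hu
      exact ha hsmem ⟨hs.le.trans hu.1, hu.2.trans htT⟩ hu.1
    simpa [smul_eq_mul, mul_comm] using this
  have h2 : s * Y s ≤ ∫ u in (0:ℝ)..s, Y u := by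
    have : (∫ u in (0:ℝ)..s, Y s) ≤ ∫ u in (0:ℝ)..s, Y u := by
      apply intervalIntegral.integral_mono_on hs.le intervalIntegrable_const hi1
      intro u hu
      exact ha ⟨hu.1, hu.2.trans (hst.trans htT)⟩ hsmem hu.2
    simpa [smul_eq_mul, mul_comm] using this
  have hsplit : (∫ u in (0:ℝ)..t, Y u) = (∫ u in (0:ℝ)..s, Y u) + ∫ u in s..t, Y u :=
    (intervalIntegral.integral_add_adjacent_intervals hi1 hi2).symm
  nlinarith [mul_le_mul_of_nonneg_left h1 hs.le,
    mul_le_mul_of_nonneg_left h2 (sub_nonneg.2 hst)]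

lemma my_sign (T θ : ℝ) (hθ : 0 < θ) (Y : ℝ → ℝ)
    (hc : ContinuousOn Y (Set.Icc 0 T)) (ha : AntitoneOn Y (Set.Icc 0 T))
    (r : ℝ) (hr : r ∈ Set.Ioc 0 T) (hroot : (∫ s in (0:ℝ)..r, Y s) = θ * r ^ 2) :
    (∀ t, 0 < t → t < r → θ * t ^ 2 < ∫ s in (0:ℝ)..t, Y s) ∧
    (∀ t, r < t → t ≤ T → (∫ s in (0:ℝ)..t, Y s) < θ * t ^ 2) := by
  constructor
  · intro t ht htr
    have h := my_avg_mono T Y hc ha t r ht htr.le hr.2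
    rw [hroot] at h
    have hre : t * (θ * r ^ 2) = r * (θ * (t * r)) := by ring
    rw [hre] at h
    have h' : θ * (t * r) ≤ ∫ s in (0:ℝ)..t, Y s := le_of_mul_le_mul_left h hr.1
    nlinarith [mul_pos (mul_pos hθ ht) (sub_pos.2 htr)]
  · intro t hrt htT
    have h := my_avg_mono T Y hc ha r t hr.1 hrt.le htT
    rw [hroot] at h
    have hre : t * (θ * r ^ 2) = r * (θ * (t * r)) := by ring
    rw [hre] at h
    have h' : (∫ s in (0:ℝ)..t, Y s) ≤ θ * (t * r) := le_of_mul_le_mul_left h hr.1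
    have ht : 0 < t := hr.1.trans hrt
    nlinarith [mul_pos (mul_pos hθ ht) (sub_pos.2 hrt)]

theorem g_index_tendsto_of_pointwise_limit
    (T : ℝ) (hT : 0 < T) (Z : ℕ → ℝ → ℝ) (Zlim : ℝ → ℝ)
    (hcont : ∀ n, ContinuousOn (Z n) (Set.Icc 0 T))
    (hanti : ∀ n, AntitoneOn (Z n) (Set.Icc 0 T))
    (hnonneg : ∀ n, ∀ x ∈ Set.Icc 0 T, 0 ≤ Z n x)
    (hcontl : ContinuousOn Zlim (Set.Icc 0 T))
    (hantil : AntitoneOn Zlim (Set.Icc 0 T))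
    (hnonnegl : ∀ x ∈ Set.Icc 0 T, 0 ≤ Zlim x)
    (hptws : ∀ x ∈ Set.Icc 0 T,
      Tendsto (fun n => Z n x) atTop (nhds (Zlim x)))
    (θ : ℝ) (hθ : 0 < θ)
    (x : ℝ) (hx : x ∈ Set.Ioc 0 T)
    (xn : ℕ → ℝ) (hxn : ∀ n, xn n ∈ Set.Ioc 0 T)
    (hgn : ∀ n, (∫ s in (0:ℝ)..(xn n), Z n s) = θ * (xn n) ^ 2)
    (hg : (∫ s in (0:ℝ)..x, Zlim s) = θ * x ^ 2) :
    Tendsto xn atTop (nhds x) := by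
  -- convergence of integrals at each point
  have hZ0 : (0:ℝ) ∈ Set.Icc (0:ℝ) T := ⟨le_rfl, hT.le⟩
  have hint : ∀ t ∈ Set.Icc (0:ℝ) T,
      Tendsto (fun n => ∫ s in (0:ℝ)..t, Z n s) atTop (nhds (∫ s in (0:ℝ)..t, Zlim s)) := by
    intro t ht
    apply intervalIntegral.tendsto_integral_filter_of_dominated_convergence
      (fun _ => Zlim 0 + 1)
    · refine Eventually.of_forall fun n => ?_
      have : Set.uIoc (0:ℝ) t ⊆ Set.Icc 0 T := by
        rw [Set.uIoc_of_le ht.1]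
        exact (Set.Ioc_subset_Icc_self).trans (Set.Icc_subset_Icc le_rfl ht.2)
      exact (((hcont n).aestronglyMeasurable measurableSet_Icc).mono_measure
        (Measure.restrict_mono this le_rfl))
    · have hb : ∀ᶠ n in atTop, Z n 0 ≤ Zlim 0 + 1 := by
        have := hptws 0 hZ0
        exact (this.eventually_le_const (by linarith))
      filter_upwards [hb] with n hn
      refine Eventually.of_forall fun s hs => ?_
      rw [Set.uIoc_of_le ht.1] at hs
      have hsmem : s ∈ Set.Icc (0:ℝ) T := ⟨hs.1.le, hs.2.trans ht.2⟩
      have h1 : 0 ≤ Z n s := hnonneg n s hsmem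
      have h2 : Z n s ≤ Z n 0 := hanti n hZ0 hsmem hs.1.le
      rw [Real.norm_eq_abs, abs_of_nonneg h1]; linarith
    · exact intervalIntegrable_const
    · refine Eventually.of_forall fun s hs => ?_
      rw [Set.uIoc_of_le ht.1] at hs
      exact hptws s ⟨hs.1.le, hs.2.trans ht.2⟩
  -- main argument
  rw [Metric.tendsto_atTop]
  intro ε hε
  rw [← Filter.eventually_atTop]
  -- lower bound point
  set t₁ : ℝ := max (x / 2) (x - ε / 2) with ht₁def
  have ht₁pos : 0 < t₁ := lt_of_lt_of_le (by linarith [hx.1]) (le_max_left _ _)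
  have ht₁lt : t₁ < x := by
    apply max_lt <;> [linarith [hx.1]; linarith]
  have ht₁T : t₁ ≤ T := ht₁lt.le.trans hx.2
  have hsignl := my_sign T θ hθ Zlim hcontl hantil x hx hg
  have hFt₁pos : θ * t₁ ^ 2 < ∫ s in (0:ℝ)..t₁, Zlim s := hsignl.1 t₁ ht₁pos ht₁lt
  have hev1 : ∀ᶠ n in atTop, θ * t₁ ^ 2 < ∫ s in (0:ℝ)..t₁, Z n s :=
    (hint t₁ ⟨ht₁pos.le, ht₁T⟩).eventually_const_lt hFt₁pos
  have hlow : ∀ᶠ n in atTop, x - ε < xn n := by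
    filter_upwards [hev1] with n hn
    have hsn := my_sign T θ hθ (Z n) (hcont n) (hanti n) (xn n) (hxn n) (hgn n)
    by_contra hcon
    push_neg at hcon
    have hxnt : xn n < t₁ := by
      have : x - ε < x - ε / 2 := by linarith
      calc xn n ≤ x - ε := hcon
        _ < x - ε / 2 := this
        _ ≤ t₁ := le_max_right _ _
    have := hsn.2 t₁ hxnt ht₁T
    linarith
  -- upper bound
  have hhigh : ∀ᶠ n in atTop, xn n < x + ε := by
    by_cases hcase : T < x + ε
    · exact Eventually.of_forall fun n => lt_of_le_of_lt (hxn n).2 hcase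
    · push_neg at hcase
      have ht₂x : x < x + ε / 2 := by linarith
      have ht₂T : x + ε / 2 ≤ T := by linarith
      have hFt₂neg : (∫ s in (0:ℝ)..(x + ε / 2), Zlim s) < θ * (x + ε / 2) ^ 2 := hsignl.2 (x + ε / 2) ht₂x ht₂T
      have hev2 : ∀ᶠ n in atTop, (∫ s in (0:ℝ)..(x + ε / 2), Z n s) < θ * (x + ε / 2) ^ 2 :=
        (hint (x + ε / 2) ⟨by linarith [hx.1], ht₂T⟩).eventually_lt_const hFt₂neg
      filter_upwards [hev2] with n hn
      have hsn := my_sign T θ hθ (Z n) (hcont n) (hanti n) (xn n) (hxn n) (hgn n)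
      by_contra hcon
      push_neg at hcon
      have ht₂lt : x + ε / 2 < xn n := by linarith
      have := hsn.1 (x + ε / 2) (by linarith [hx.1]) ht₂lt
      linarith
  filter_upwards [hlow, hhigh] with n h1 h2
  rw [Real.dist_eq, abs_sub_lt_iff]
  constructor <;> linarith
end

section
/- Key inequality for the generalized g-index: under pointwise convergence hypotheses, with x = g_θ(Z) > 0 and x_n = g_θ(Z_n), one has |x_n − x| ≤ (1/(θx)) |∫_0^x Z_n(s)ds − ∫_0^x Z(s)ds| for every n. -/
open Filter Set intervalIntegral

lemma gidx_aux_upper (f : ℝ → ℝ) (T a b : ℝ)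
    (hf : ContinuousOn f (Set.Icc 0 T)) (hanti : AntitoneOn f (Set.Icc 0 T))
    (h0a : 0 ≤ a) (hab : a ≤ b) (hbT : b ≤ T) :
    (∫ s in a..b, f s) ≤ (b - a) * f a := by
  have hsub : Set.Icc a b ⊆ Set.Icc 0 T := Set.Icc_subset_Icc h0a hbT
  have hint : IntervalIntegrable f MeasureTheory.volume a b :=
    (hf.mono hsub).intervalIntegrable_of_Icc hab
  have hmono : ∀ s ∈ Set.Icc a b, f s ≤ f a := fun s hs =>
    hanti ⟨h0a, hab.trans hbT⟩ (hsub hs) hs.1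
  calc (∫ s in a..b, f s) ≤ ∫ _ in a..b, f a :=
        intervalIntegral.integral_mono_on hab hint intervalIntegrable_const hmono
    _ = (b - a) * f a := by simp [mul_comm]

lemma gidx_aux_lower (f : ℝ → ℝ) (T a b : ℝ)
    (hf : ContinuousOn f (Set.Icc 0 T)) (hanti : AntitoneOn f (Set.Icc 0 T))
    (h0a : 0 ≤ a) (hab : a ≤ b) (hbT : b ≤ T) :
    (b - a) * f b ≤ ∫ s in a..b, f s := by
  have hsub : Set.Icc a b ⊆ Set.Icc 0 T := Set.Icc_subset_Icc h0a hbT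
  have hint : IntervalIntegrable f MeasureTheory.volume a b :=
    (hf.mono hsub).intervalIntegrable_of_Icc hab
  have hmono : ∀ s ∈ Set.Icc a b, f b ≤ f s := fun s hs =>
    hanti (hsub hs) ⟨h0a.trans hab, hbT⟩ hs.2
  calc (b - a) * f b = ∫ _ in a..b, f b := by simp [mul_comm]
    _ ≤ ∫ s in a..b, f s :=
        intervalIntegral.integral_mono_on hab intervalIntegrable_const hint hmono

theorem g_index_key_inequality
    (T : ℝ) (hT : 0 < T) (Z : ℕ → ℝ → ℝ) (Zlim : ℝ → ℝ)
    (hcont : ∀ n, ContinuousOn (Z n) (Set.Icc 0 T))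
    (hanti : ∀ n, AntitoneOn (Z n) (Set.Icc 0 T))
    (hnonneg : ∀ n, ∀ x ∈ Set.Icc 0 T, 0 ≤ Z n x)
    (hcontl : ContinuousOn Zlim (Set.Icc 0 T))
    (hantil : AntitoneOn Zlim (Set.Icc 0 T))
    (hnonnegl : ∀ x ∈ Set.Icc 0 T, 0 ≤ Zlim x)
    (θ : ℝ) (hθ : 0 < θ)
    (x : ℝ) (hx : x ∈ Set.Ioc 0 T)
    (xn : ℕ → ℝ) (hxn : ∀ n, xn n ∈ Set.Ioc 0 T)
    (hgn : ∀ n, (∫ s in (0:ℝ)..(xn n), Z n s) = θ * (xn n) ^ 2)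
    (hg : (∫ s in (0:ℝ)..x, Zlim s) = θ * x ^ 2) :
    ∀ n, |xn n - x| ≤ (1 / (θ * x)) *
      |(∫ s in (0:ℝ)..x, Z n s) - ∫ s in (0:ℝ)..x, Zlim s| := by
  intro n
  obtain ⟨hx0, hxT⟩ := hx
  obtain ⟨ha0, haT⟩ := hxn n
  set a := xn n with ha
  set I := (∫ s in (0:ℝ)..x, Z n s) with hIdef
  have hθx : 0 < θ * x := mul_pos hθ hx0
  rw [hg]
  have hint : ∀ u v : ℝ, 0 ≤ u → u ≤ v → v ≤ T →
      IntervalIntegrable (Z n) MeasureTheory.volume u v := fun u v h0 huv hvT =>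
    ((hcont n).mono (Set.Icc_subset_Icc h0 hvT)).intervalIntegrable_of_Icc huv
  have key : θ * x * |a - x| ≤ |I - θ * x ^ 2| := by
    rcases le_total a x with h | h
    · -- a ≤ x
      have hfa : a * Z n a ≤ θ * a ^ 2 := by
        have := gidx_aux_lower (Z n) T 0 a (hcont n) (hanti n) le_rfl ha0.le haT
        rw [hgn n] at this; linarith
      have h2 : (∫ s in a..x, Z n s) ≤ (x - a) * Z n a :=
        gidx_aux_upper (Z n) T a x (hcont n) (hanti n) ha0.le h hxT
      have hsplit : I = θ * a ^ 2 + ∫ s in a..x, Z n s := by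
        rw [hIdef, ← hgn n]
        exact (intervalIntegral.integral_add_adjacent_intervals
          (hint 0 a le_rfl ha0.le haT) (hint a x ha0.le h hxT)).symm
      have hZa : Z n a ≤ θ * a := by
        have := mul_le_mul_of_nonneg_left hfa (le_of_lt (inv_pos.2 ha0))
        nlinarith [ha0]
      have hIle : I ≤ θ * a * x := by nlinarith [sub_nonneg.2 h]
      rw [abs_sub_comm, abs_of_nonneg (by linarith : (0:ℝ) ≤ x - a)]
      calc θ * x * (x - a) ≤ -(I - θ * x ^ 2) := by nlinarith
        _ ≤ |I - θ * x ^ 2| := neg_le_abs _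
    · -- x ≤ a
      have hfx : x * Z n x ≤ I := by
        have := gidx_aux_lower (Z n) T 0 x (hcont n) (hanti n) le_rfl hx0.le hxT
        rw [← hIdef] at this; linarith
      have h2 : (∫ s in x..a, Z n s) ≤ (a - x) * Z n x :=
        gidx_aux_upper (Z n) T x a (hcont n) (hanti n) hx0.le h haT
      have hsplit : θ * a ^ 2 = I + ∫ s in x..a, Z n s := by
        rw [hIdef, ← hgn n]
        exact (intervalIntegral.integral_add_adjacent_intervals
          (hint 0 x le_rfl hx0.le hxT) (hint x a hx0.le h haT)).symm
      have hZx : x * Z n x ≤ I := hfx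
      have hIge : θ * a * x ≤ I := by nlinarith [sub_nonneg.2 h, hx0]
      rw [abs_of_nonneg (by linarith : (0:ℝ) ≤ a - x)]
      calc θ * x * (a - x) ≤ I - θ * x ^ 2 := by nlinarith
        _ ≤ |I - θ * x ^ 2| := le_abs_self _
  calc |a - x| = (θ * x)⁻¹ * (θ * x * |a - x|) := by field_simp
    _ ≤ (θ * x)⁻¹ * |I - θ * x ^ 2| :=
        mul_le_mul_of_nonneg_left key (inv_nonneg.2 hθx.le)
    _ = 1 / (θ * x) * |I - θ * x ^ 2| := by rw [one_div]
end

section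
/- Let m be a PED-measure with associated continuous strictly increasing function f_m on [0,T] (so y = m(Y) iff Y(y) = f_m(y)). If Z_n → Z pointwise with all Z_n decreasing and nonnegative on [0,T], and y_n = m(Z_n), y = m(Z) exist, then |f_m(y) − f_m(y_n)| ≤ |Z(y) − Z_n(y)| for each n, and consequently y_n → y. -/
open Filter Set

theorem ped_measure_convergence
    (T : ℝ) (hT : 0 < T) (fm : ℝ → ℝ)
    (hfmc : ContinuousOn fm (Set.Icc 0 T))
    (hfm : StrictMonoOn fm (Set.Icc 0 T))
    (Z : ℕ → ℝ → ℝ) (Zlim : ℝ → ℝ)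
    (hanti : ∀ n, AntitoneOn (Z n) (Set.Icc 0 T))
    (hantil : AntitoneOn Zlim (Set.Icc 0 T))
    (hptws : ∀ x ∈ Set.Icc 0 T,
      Tendsto (fun n => Z n x) atTop (nhds (Zlim x)))
    (yn : ℕ → ℝ) (hyn : ∀ n, yn n ∈ Set.Icc 0 T)
    (y : ℝ) (hy : y ∈ Set.Icc 0 T)
    (hmn : ∀ n, Z n (yn n) = fm (yn n))
    (hm : Zlim y = fm y) :
    (∀ n, |fm y - fm (yn n)| ≤ |Zlim y - Z n y|) ∧
      Tendsto yn atTop (nhds y) := by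
  have key : ∀ n, |fm y - fm (yn n)| ≤ |Zlim y - Z n y| := by
    intro n
    rcases le_total (yn n) y with h | h
    · have h1 : fm (yn n) ≤ fm y := hfm.monotoneOn (hyn n) hy h
      have h2 : Z n y ≤ Z n (yn n) := hanti n (hyn n) hy h
      rw [abs_of_nonneg (by linarith)]
      calc fm y - fm (yn n) = Zlim y - Z n (yn n) := by rw [hm, hmn n]
        _ ≤ Zlim y - Z n y := by linarith
        _ ≤ |Zlim y - Z n y| := le_abs_self _
    · have h1 : fm y ≤ fm (yn n) := hfm.monotoneOn hy (hyn n) h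
      have h2 : Z n (yn n) ≤ Z n y := hanti n hy (hyn n) h
      rw [abs_of_nonpos (by linarith), neg_sub]
      calc fm (yn n) - fm y = Z n (yn n) - Zlim y := by rw [hm, hmn n]
        _ ≤ Z n y - Zlim y := by linarith
        _ ≤ |Z n y - Zlim y| := le_abs_self _
        _ = |Zlim y - Z n y| := abs_sub_comm _ _
  refine ⟨key, ?_⟩
  have hZy : Tendsto (fun n => |Zlim y - Z n y|) atTop (nhds 0) := by
    have := ((tendsto_const_nhds (x := Zlim y)).sub (hptws y hy)).abs
    simpa using this
  have hfmyn : Tendsto (fun n => fm (yn n)) atTop (nhds (fm y)) := by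
    rw [tendsto_iff_dist_tendsto_zero]
    apply squeeze_zero (fun n => dist_nonneg) (fun n => ?_) hZy
    rw [Real.dist_eq, abs_sub_comm]
    exact key n
  apply tendsto_of_subseq_tendsto
  intro ns hns
  obtain ⟨L, hL, ms, hms, hmsL⟩ :=
    (isCompact_Icc (a := (0:ℝ)) (b := T)).tendsto_subseq (fun n => hyn (ns n))
  refine ⟨ms, ?_⟩
  have hmsL' : Tendsto (fun n => yn (ns (ms n))) atTop (nhdsWithin L (Set.Icc 0 T)) := by
    apply tendsto_nhdsWithin_of_tendsto_nhds_of_eventually_within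
    · exact hmsL
    · exact Filter.Eventually.of_forall (fun n => hyn _)
  have hfmL : Tendsto (fun n => fm (yn (ns (ms n)))) atTop (nhds (fm L)) :=
    (hfmc L hL).tendsto.comp hmsL'
  have hfmL' : Tendsto (fun n => fm (yn (ns (ms n)))) atTop (nhds (fm y)) :=
    (hfmyn.comp (hns.comp hms.tendsto_atTop))
  have : fm L = fm y := tendsto_nhds_unique hfmL hfmL'
  have : L = y := hfm.injOn hL hy this
  rw [this] at hmsL
  exact hmsL
end

section
/- Generalized h-index convergence: fix θ > 0. If Z_n → Z pointwise on [0,T], all functions decreasing, and h_θ(Z_n) = x_n, h_θ(Z) = x are defined by Z_n(x_n) = θ x_n and Z(x) = θ x, then x_n → x; moreover θ|x − x_n| ≤ |Z(x) − Z_n(x)| for all n. -/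
open Filter Set

theorem generalized_h_index_convergence
    (T : ℝ) (hT : 0 < T) (θ : ℝ) (hθ : 0 < θ)
    (Z : ℕ → ℝ → ℝ) (Zlim : ℝ → ℝ)
    (hanti : ∀ n, AntitoneOn (Z n) (Set.Icc 0 T))
    (hantil : AntitoneOn Zlim (Set.Icc 0 T))
    (hptws : ∀ x ∈ Set.Icc 0 T,
      Tendsto (fun n => Z n x) atTop (nhds (Zlim x)))
    (xn : ℕ → ℝ) (hxn : ∀ n, xn n ∈ Set.Icc 0 T)
    (x : ℝ) (hx : x ∈ Set.Icc 0 T)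
    (hhn : ∀ n, Z n (xn n) = θ * xn n)
    (hh : Zlim x = θ * x) :
    Tendsto xn atTop (nhds x) ∧
      ∀ n, θ * |x - xn n| ≤ |Zlim x - Z n x| := by
  have key : ∀ n, θ * |x - xn n| ≤ |Zlim x - Z n x| := by
    intro n
    rcases le_total (xn n) x with h | h
    · have h1 : Z n x ≤ Z n (xn n) := hanti n (hxn n) hx h
      have : θ * (x - xn n) ≤ Zlim x - Z n x := by
        rw [hh]; have := hhn n; nlinarith
      calc θ * |x - xn n| = θ * (x - xn n) := by rw [abs_of_nonneg (by linarith)]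
        _ ≤ Zlim x - Z n x := this
        _ ≤ |Zlim x - Z n x| := le_abs_self _
    · have h1 : Z n (xn n) ≤ Z n x := hanti n hx (hxn n) h
      have : θ * (xn n - x) ≤ Z n x - Zlim x := by
        rw [hh]; have := hhn n; nlinarith
      calc θ * |x - xn n| = θ * (xn n - x) := by rw [abs_sub_comm, abs_of_nonneg (by linarith)]
        _ ≤ Z n x - Zlim x := this
        _ ≤ |Zlim x - Z n x| := by rw [abs_sub_comm]; exact le_abs_self _
  refine ⟨?_, key⟩
  have hZ : Tendsto (fun n => |Zlim x - Z n x|) atTop (nhds 0) := by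
    have := (hptws x hx)
    have : Tendsto (fun n => Zlim x - Z n x) atTop (nhds (Zlim x - Zlim x)) :=
      tendsto_const_nhds.sub this
    rw [sub_self] at this
    simpa using this.abs
  have habs : Tendsto (fun n => |x - xn n|) atTop (nhds 0) := by
    have h0 : Tendsto (fun n => (1/θ) * |Zlim x - Z n x|) atTop (nhds 0) := by
      simpa using hZ.const_mul (1/θ)
    refine squeeze_zero (fun n => abs_nonneg _) (fun n => ?_) h0
    rw [show (1/θ) * |Zlim x - Z n x| = |Zlim x - Z n x| / θ by ring,
      le_div_iff₀' hθ]
    exact key n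
  have : Tendsto (fun n => xn n - x) atTop (nhds 0) := by
    have h2 : Tendsto (fun n => x - xn n) atTop (nhds 0) :=
      (tendsto_zero_iff_abs_tendsto_zero _).mpr habs
    simpa using h2.neg
  have := this.add (tendsto_const_nhds (x := x))
  simpa using this
end

section
/- Generalized Kosmulski-index convergence: fix θ > 0 and a natural number p ≥ 1. If Z_n → Z pointwise on [0,T], all functions decreasing and nonnegative, and x_n, x ∈ [0,T] satisfy Z_n(x_n) = θ x_n^p and Z(x) = θ x^p, then x_n → x. -/
open Filter Set

theorem kosmulski_index_convergence
    (T : ℝ) (hT : 0 < T) (θ : ℝ) (hθ : 0 < θ)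
    (p : ℕ) (hp : 1 ≤ p)
    (Z : ℕ → ℝ → ℝ) (Zlim : ℝ → ℝ)
    (hanti : ∀ n, AntitoneOn (Z n) (Set.Icc 0 T))
    (hnonneg : ∀ n, ∀ x ∈ Set.Icc 0 T, 0 ≤ Z n x)
    (hantil : AntitoneOn Zlim (Set.Icc 0 T))
    (hnonnegl : ∀ x ∈ Set.Icc 0 T, 0 ≤ Zlim x)
    (hptws : ∀ x ∈ Set.Icc 0 T,
      Tendsto (fun n => Z n x) atTop (nhds (Zlim x)))
    (xn : ℕ → ℝ) (hxn : ∀ n, xn n ∈ Set.Icc 0 T)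
    (x : ℝ) (hx : x ∈ Set.Icc 0 T)
    (hhn : ∀ n, Z n (xn n) = θ * (xn n) ^ p)
    (hh : Zlim x = θ * x ^ p) :
    Tendsto xn atTop (nhds x) := by
  obtain ⟨hx0, hxT⟩ := hx
  have hpne : p ≠ 0 := by omega
  refine tendsto_order.2 ⟨?_, ?_⟩
  · -- lower bound: ∀ a < x, eventually a < xn n
    intro a ha
    by_cases ha0 : 0 ≤ a
    · have haI : a ∈ Set.Icc 0 T := ⟨ha0, le_trans ha.le hxT⟩
      have hlt : θ * a ^ p < Zlim a := by
        have h1 : Zlim x ≤ Zlim a := hantil haI ⟨hx0, hxT⟩ ha.le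
        have h2 : θ * a ^ p < θ * x ^ p := by
          have := pow_lt_pow_left₀ ha ha0 hpne
          nlinarith
        linarith [hh ▸ h1]
      have hev : ∀ᶠ n in atTop, θ * a ^ p < Z n a :=
        (hptws a haI).eventually_const_lt hlt
      filter_upwards [hev] with n hn
      by_contra hcon
      push_neg at hcon
      have h3 : Z n a ≤ Z n (xn n) := hanti n (hxn n) haI hcon
      have h4 : θ * (xn n) ^ p ≤ θ * a ^ p := by
        have : (xn n) ^ p ≤ a ^ p := pow_le_pow_left₀ (hxn n).1 hcon p
        nlinarith
      rw [hhn n] at h3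
      linarith
    · push_neg at ha0
      filter_upwards with n
      exact lt_of_lt_of_le ha0 (hxn n).1
  · -- upper bound
    intro b hb
    by_cases hbT : b ≤ T
    · have hbI : b ∈ Set.Icc 0 T := ⟨le_trans hx0 hb.le, hbT⟩
      have hlt : Zlim b < θ * b ^ p := by
        have h1 : Zlim b ≤ Zlim x := hantil ⟨hx0, hxT⟩ hbI hb.le
        have h2 : θ * x ^ p < θ * b ^ p := by
          have := pow_lt_pow_left₀ hb hx0 hpne
          nlinarith
        linarith [hh ▸ h1]
      have hev : ∀ᶠ n in atTop, Z n b < θ * b ^ p :=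
        (hptws b hbI).eventually_lt_const hlt
      filter_upwards [hev] with n hn
      by_contra hcon
      push_neg at hcon
      have h3 : Z n (xn n) ≤ Z n b := hanti n hbI (hxn n) hcon
      have h4 : θ * b ^ p ≤ θ * (xn n) ^ p := by
        have : b ^ p ≤ (xn n) ^ p := pow_le_pow_left₀ hbI.1 hcon p
        nlinarith
      rw [hhn n] at h3
      linarith
    · push_neg at hbT
      filter_upwards with n
      exact lt_of_le_of_lt (hxn n).2 hbT
end

section
/- R-index convergence: fix θ > 0. Suppose Z_n → Z pointwise on [0,T], with all Z_n, Z continuous, antitone, nonnegative, and suppose h_θ(Z_n) and h_θ(Z) exist (i.e. Z_n(h_θ(Z_n)) = θ·h_θ(Z_n), Z(h_θ(Z)) = θ·h_θ(Z)). Define R_θ(Y)² = ∫_0^{h_θ(Y)} Y(s)ds. Then R_θ(Z_n)² → R_θ(Z)². -/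
open Filter Set intervalIntegral

theorem R_index_convergence
    (T : ℝ) (hT : 0 < T) (θ : ℝ) (hθ : 0 < θ)
    (Z : ℕ → ℝ → ℝ) (Zlim : ℝ → ℝ)
    (hcont : ∀ n, ContinuousOn (Z n) (Set.Icc 0 T))
    (hanti : ∀ n, AntitoneOn (Z n) (Set.Icc 0 T))
    (hnonneg : ∀ n, ∀ x ∈ Set.Icc 0 T, 0 ≤ Z n x)
    (hcontl : ContinuousOn Zlim (Set.Icc 0 T))
    (hantil : AntitoneOn Zlim (Set.Icc 0 T))
    (hnonnegl : ∀ x ∈ Set.Icc 0 T, 0 ≤ Zlim x)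
    (hptws : ∀ x ∈ Set.Icc 0 T,
      Tendsto (fun n => Z n x) atTop (nhds (Zlim x)))
    (hn : ℕ → ℝ) (hhn : ∀ n, hn n ∈ Set.Icc 0 T)
    (h : ℝ) (hh : h ∈ Set.Icc 0 T)
    (hhn_eq : ∀ n, Z n (hn n) = θ * hn n)
    (hh_eq : Zlim h = θ * h) :
    Tendsto (fun n => ∫ s in (0:ℝ)..(hn n), Z n s) atTop
      (nhds (∫ s in (0:ℝ)..h, Zlim s)) := by
  obtain ⟨hh0, hhT⟩ := hh
  have hT0 : (0:ℝ) ∈ Set.Icc 0 T := ⟨le_refl 0, hT.le⟩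
  -- Step 1 : hn → h
  have hn_lim : Tendsto hn atTop (nhds h) := by
    rw [tendsto_order]
    constructor
    · intro a ha
      rcases lt_or_ge a 0 with ha0 | ha0
      · exact Eventually.of_forall fun n => lt_of_lt_of_le ha0 (hhn n).1
      · have haT : a ∈ Set.Icc 0 T := ⟨ha0, ha.le.trans hhT⟩
        have hZa : θ * a < Zlim a := by
          calc θ * a < θ * h := by nlinarith
            _ = Zlim h := hh_eq.symm
            _ ≤ Zlim a := hantil haT ⟨hh0, hhT⟩ ha.le
        have hev : ∀ᶠ n in atTop, θ * a < Z n a :=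
          (hptws a haT).eventually_const_lt hZa
        filter_upwards [hev] with n hlt
        by_contra hcon
        push_neg at hcon
        have h1 : Z n a ≤ Z n (hn n) := hanti n (hhn n) haT hcon
        have h2 : Z n (hn n) = θ * hn n := hhn_eq n
        have : θ * hn n ≤ θ * a := by
          have := (hhn n).1
          nlinarith
        linarith
    · intro b hb
      rcases lt_or_ge T b with hbT | hbT
      · exact Eventually.of_forall fun n => lt_of_le_of_lt (hhn n).2 hbT
      · have hbI : b ∈ Set.Icc 0 T := ⟨hh0.trans hb.le, hbT⟩
        have hZb : Zlim b < θ * b := by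
          calc Zlim b ≤ Zlim h := hantil ⟨hh0, hhT⟩ hbI hb.le
            _ = θ * h := hh_eq
            _ < θ * b := by nlinarith
        have hev : ∀ᶠ n in atTop, Z n b < θ * b :=
          (hptws b hbI).eventually_lt_const hZb
        filter_upwards [hev] with n hlt
        by_contra hcon
        push_neg at hcon
        have h1 : Z n (hn n) ≤ Z n b := hanti n hbI (hhn n) hcon
        have h2 : Z n (hn n) = θ * hn n := hhn_eq n
        nlinarith
  -- a uniform eventual bound
  set M : ℝ := Zlim 0 + 1 with hM
  have hMev : ∀ᶠ n in atTop, ∀ x ∈ Set.Icc 0 T, ‖Z n x‖ ≤ M := by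
    have hev : ∀ᶠ n in atTop, Z n 0 < M :=
      (hptws 0 hT0).eventually_lt_const (by simp [hM])
    filter_upwards [hev] with n hlt x hx
    rw [Real.norm_of_nonneg (hnonneg n x hx)]
    exact le_trans (hanti n hT0 hx hx.1) hlt.le
  -- Step 2a : ∫_0^h Z n → ∫_0^h Zlim
  have hA : Tendsto (fun n => ∫ s in (0:ℝ)..h, Z n s) atTop
      (nhds (∫ s in (0:ℝ)..h, Zlim s)) := by
    have hsub : Set.uIoc (0:ℝ) h ⊆ Set.Icc 0 T := fun x hx => by
      rw [Set.uIoc_of_le hh0] at hx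
      exact ⟨hx.1.le, hx.2.trans hhT⟩
    refine tendsto_integral_filter_of_dominated_convergence (fun _ => M) ?_ ?_ ?_ ?_
    · exact Eventually.of_forall fun n =>
        (((hcont n).mono hsub).aestronglyMeasurable measurableSet_uIoc)
    · filter_upwards [hMev] with n hb
      exact Eventually.of_forall fun x hx => hb x (hsub hx)
    · exact intervalIntegrable_const
    · exact Eventually.of_forall fun x hx => hptws x (hsub hx)
  -- Step 2b : ∫_h^{hn n} Z n → 0
  have hB : Tendsto (fun n => ∫ s in h..(hn n), Z n s) atTop (nhds 0) := by
    have hbd : ∀ᶠ n in atTop,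
        ‖∫ s in h..(hn n), Z n s‖ ≤ M * |hn n - h| := by
      filter_upwards [hMev] with n hb
      refine intervalIntegral.norm_integral_le_of_norm_le_const fun x hx => ?_
      refine hb x ?_
      have := Set.uIoc_subset_uIcc (a := h) (b := hn n) hx
      rcases Set.mem_uIcc.1 this with h1 | h1
      · exact ⟨hh0.trans h1.1, h1.2.trans (hhn n).2⟩
      · exact ⟨(hhn n).1.trans h1.1, h1.2.trans hhT⟩
    have hlim0 : Tendsto (fun n => M * |hn n - h|) atTop (nhds 0) := by
      have : Tendsto (fun n => hn n - h) atTop (nhds 0) := by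
        simpa using hn_lim.sub (tendsto_const_nhds (x := h))
      simpa using (this.abs.const_mul M)
    refine squeeze_zero_norm' hbd hlim0
  -- combine
  have heq : ∀ n, (∫ s in (0:ℝ)..(hn n), Z n s)
      = (∫ s in (0:ℝ)..h, Z n s) + ∫ s in h..(hn n), Z n s := by
    intro n
    refine (intervalIntegral.integral_add_adjacent_intervals ?_ ?_).symm
    · refine ((hcont n).mono ?_).intervalIntegrable
      rw [Set.uIcc_of_le hh0]
      exact Set.Icc_subset_Icc le_rfl hhT
    · refine ((hcont n).mono ?_).intervalIntegrable
      refine Set.uIcc_subset_Icc ⟨hh0, hhT⟩ (hhn n)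
  have := hA.add hB
  rw [add_zero] at this
  refine this.congr fun n => (heq n).symm
end

section
/- Polar function convergence: for Y decreasing continuous nonnegative on [0,T], define ρ_Y(φ) = h_{tan φ}(Y)·√(1 + tan²φ) for φ ∈ (0, π/2), where h_θ(Y) is the unique x with Y(x) = θx. If Z_n → Z pointwise with all functions in U and all required h-indices exist, then ρ_{Z_n}(φ) → ρ_Z(φ) for every φ ∈ (0, π/2). -/
open Filter Set Real

theorem polar_function_convergence
    (T : ℝ) (hT : 0 < T)
    (Z : ℕ → ℝ → ℝ) (Zlim : ℝ → ℝ)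
    (hcont : ∀ n, ContinuousOn (Z n) (Set.Icc 0 T))
    (hanti : ∀ n, AntitoneOn (Z n) (Set.Icc 0 T))
    (hnonneg : ∀ n, ∀ x ∈ Set.Icc 0 T, 0 ≤ Z n x)
    (hcontl : ContinuousOn Zlim (Set.Icc 0 T))
    (hantil : AntitoneOn Zlim (Set.Icc 0 T))
    (hnonnegl : ∀ x ∈ Set.Icc 0 T, 0 ≤ Zlim x)
    (hptws : ∀ x ∈ Set.Icc 0 T,
      Tendsto (fun n => Z n x) atTop (nhds (Zlim x)))
    (hZn : ℕ → ℝ → ℝ) (hZ : ℝ → ℝ)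
    (hmemn : ∀ n, ∀ φ ∈ Set.Ioo 0 (π / 2), hZn n φ ∈ Set.Icc 0 T)
    (hmem : ∀ φ ∈ Set.Ioo 0 (π / 2), hZ φ ∈ Set.Icc 0 T)
    (heqn : ∀ n, ∀ φ ∈ Set.Ioo 0 (π / 2),
      Z n (hZn n φ) = Real.tan φ * hZn n φ)
    (heq : ∀ φ ∈ Set.Ioo 0 (π / 2),
      Zlim (hZ φ) = Real.tan φ * hZ φ) :
    ∀ φ ∈ Set.Ioo 0 (π / 2),
      Tendsto (fun n => hZn n φ * Real.sqrt (1 + Real.tan φ ^ 2)) atTop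
        (nhds (hZ φ * Real.sqrt (1 + Real.tan φ ^ 2))) := by
  intro φ hφ
  obtain ⟨hφ0, hφ2⟩ := hφ
  have hθ : 0 < Real.tan φ := Real.tan_pos_of_pos_of_lt_pi_div_two hφ0 hφ2
  set θ := Real.tan φ with hθdef
  set x := hZ φ with hxdef
  have hxmem : x ∈ Set.Icc 0 T := hmem φ ⟨hφ0, hφ2⟩
  suffices h : Tendsto (fun n => hZn n φ) atTop (nhds x) by
    exact h.mul_const _
  rw [Metric.tendsto_atTop]
  intro ε hε
  have hub : ∀ᶠ n in atTop, hZn n φ < x + ε := by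
    by_cases hc : x + ε ≤ T
    · have hmemx : x + ε ∈ Set.Icc 0 T := ⟨by linarith [hxmem.1], hc⟩
      have hg : Zlim (x + ε) < θ * (x + ε) := by
        have h1 : Zlim (x + ε) ≤ Zlim x := hantil hxmem hmemx (by linarith)
        have h2 : Zlim x = θ * x := heq φ ⟨hφ0, hφ2⟩
        nlinarith
      have hev := (hptws (x + ε) hmemx).eventually_lt_const hg
      filter_upwards [hev] with n hn
      by_contra hcon
      push_neg at hcon
      have hm := hmemn n φ ⟨hφ0, hφ2⟩
      have h3 : Z n (hZn n φ) ≤ Z n (x + ε) := hanti n hmemx hm hcon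
      have h4 : Z n (hZn n φ) = θ * hZn n φ := heqn n φ ⟨hφ0, hφ2⟩
      nlinarith
    · filter_upwards with n
      have := (hmemn n φ ⟨hφ0, hφ2⟩).2
      linarith [not_le.mp hc]
  have hlb : ∀ᶠ n in atTop, x - ε < hZn n φ := by
    by_cases hc : 0 ≤ x - ε
    · have hmemx : x - ε ∈ Set.Icc 0 T := ⟨hc, by linarith [hxmem.2]⟩
      have hg : θ * (x - ε) < Zlim (x - ε) := by
        have h1 : Zlim x ≤ Zlim (x - ε) := hantil hmemx hxmem (by linarith)
        have h2 : Zlim x = θ * x := heq φ ⟨hφ0, hφ2⟩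
        nlinarith
      have hev := (hptws (x - ε) hmemx).eventually_const_lt hg
      filter_upwards [hev] with n hn
      by_contra hcon
      push_neg at hcon
      have hm := hmemn n φ ⟨hφ0, hφ2⟩
      have h3 : Z n (x - ε) ≤ Z n (hZn n φ) := hanti n hm hmemx hcon
      have h4 : Z n (hZn n φ) = θ * hZn n φ := heqn n φ ⟨hφ0, hφ2⟩
      nlinarith
    · filter_upwards with n
      have := (hmemn n φ ⟨hφ0, hφ2⟩).1
      linarith [not_le.mp hc]
  obtain ⟨N, hN⟩ := (hub.and hlb).exists_forall_of_atTop
  exact ⟨N, fun n hn => by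
    have := hN n hn
    rw [Real.dist_eq, abs_sub_lt_iff]
    constructor <;> linarith [this.1, this.2]⟩
end

section
/- If Z_n → Z pointwise on [0,T] with all Z_n continuous, antitone, nonnegative, and Z continuous, then the average functions θ ↦ μ_θ(Z_n) = (1/θ)∫_0^θ Z_n converge uniformly on (0,T] (or on any [δ,T], δ>0) to θ ↦ μ_θ(Z), where μ_0 is defined as the limit Z(0). -/
open Filter Set intervalIntegral

/-- Second Dini theorem: antitone functions converging pointwise to a continuous
limit on a compact interval converge uniformly. -/
lemma dini2 (T : ℝ) (hT : 0 < T) (Z : ℕ → ℝ → ℝ) (Zlim : ℝ → ℝ)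
    (hanti : ∀ n, AntitoneOn (Z n) (Set.Icc 0 T))
    (hcontl : ContinuousOn Zlim (Set.Icc 0 T))
    (hptws : ∀ x ∈ Set.Icc 0 T,
      Tendsto (fun n => Z n x) atTop (nhds (Zlim x))) :
    TendstoUniformlyOn Z Zlim atTop (Set.Icc 0 T) := by
  rw [Metric.tendstoUniformlyOn_iff]
  intro ε hε
  -- uniform continuity of the limit
  obtain ⟨δ, hδ, hu⟩ := (Metric.uniformContinuousOn_iff).1
    (isCompact_Icc.uniformContinuousOn_of_continuous hcontl) (ε/4) (by linarith)
  obtain ⟨k, hk⟩ := exists_nat_gt (T/δ)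
  have hk0 : 0 < (k:ℝ) := lt_trans (div_pos hT hδ) hk
  have hk0' : 0 < k := by exact_mod_cast hk0
  have hTk : T / k < δ := by
    rw [div_lt_iff₀ hk0]
    calc T = (T/δ) * δ := by field_simp
    _ < k * δ := by nlinarith
    _ = δ * k := by ring
  set p : ℕ → ℝ := fun i => i * T / k with hp
  have hpmem : ∀ i ≤ k, p i ∈ Set.Icc 0 T := by
    intro i hi
    constructor
    · positivity
    · rw [hp]
      rw [div_le_iff₀ hk0]
      have : (i:ℝ) ≤ k := by exact_mod_cast hi
      nlinarith
  have key : ∀ᶠ n in atTop, ∀ i ∈ Finset.range (k+1),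
      dist (Z n (p i)) (Zlim (p i)) < ε/4 := by
    rw [Filter.eventually_all_finset]
    intro i hi
    have hi' : i ≤ k := Nat.lt_succ_iff.1 (Finset.mem_range.1 hi)
    have := (hptws (p i) (hpmem i hi')).eventually
      (Metric.ball_mem_nhds (Zlim (p i)) (show (0:ℝ) < ε/4 by linarith))
    simpa [Metric.mem_ball] using this
  filter_upwards [key] with n hn x hx
  -- find the grid interval containing x
  obtain ⟨i, hik, hle, hge⟩ : ∃ i, i < k ∧ p i ≤ x ∧ x ≤ p (i+1) := by
    set j := min (⌊x * k / T⌋₊) (k-1) with hj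
    have hx0 : 0 ≤ x := hx.1
    have hjc : (j:ℝ) ≤ x * k / T :=
      le_trans (Nat.cast_le.2 (min_le_left _ _)) (Nat.floor_le (by positivity))
    refine ⟨j, by omega, ?_, ?_⟩
    · rw [hp]
      rw [div_le_iff₀ hk0]
      have h1 := mul_le_mul_of_nonneg_right hjc (le_of_lt hT)
      have h2 : x * k / T * T = x * k := by field_simp
      linarith
    · rw [hp, le_div_iff₀ hk0]
      rcases le_or_gt (⌊x * k / T⌋₊) (k-1) with h | h
      · have hj' : (j:ℝ) = ⌊x * k / T⌋₊ := by rw [hj, min_eq_left h]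
        have h3 : x * k / T < (j:ℝ) + 1 := by
          rw [hj']; exact_mod_cast Nat.lt_floor_add_one (x * k / T)
        have h5 := mul_lt_mul_of_pos_right h3 hT
        have h6 : x * k / T * T = x * k := by field_simp
        rw [h6] at h5
        push_cast
        linarith
      · have hj1 : j + 1 = k := by omega
        rw [hj1]
        nlinarith [hx.2]
  have hpi : p i ∈ Set.Icc 0 T := hpmem i (le_of_lt hik)
  have hpi1 : p (i+1) ∈ Set.Icc 0 T := hpmem (i+1) hik
  have hgap : p (i+1) - p i = T / k := by
    rw [hp]; push_cast; field_simp; ring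
  have hd1 : dist (p i) x < δ := by
    rw [Real.dist_eq, abs_of_nonpos (by linarith)]
    have : x ≤ p (i+1) := hge
    linarith [hTk]
  have hd2 : dist (p (i+1)) x < δ := by
    rw [Real.dist_eq, abs_of_nonneg (by linarith)]
    linarith [hTk]
  have e1 := hn i (Finset.mem_range.2 (by omega))
  have e2 := hn (i+1) (Finset.mem_range.2 (by omega))
  have c1 := hu (p i) hpi x hx hd1
  have c2 := hu (p (i+1)) hpi1 x hx hd2
  have a1 : Z n x ≤ Z n (p i) := hanti n hpi hx hle
  have a2 : Z n (p (i+1)) ≤ Z n x := hanti n hx hpi1 hge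
  rw [Real.dist_eq] at e1 e2 c1 c2 ⊢
  rw [abs_lt]
  rw [abs_lt] at e1 e2 c1 c2
  constructor <;> nlinarith [e1.1, e1.2, e2.1, e2.2, c1.1, c1.2, c2.1, c2.2]

theorem average_uniform_convergence
    (T : ℝ) (hT : 0 < T) (Z : ℕ → ℝ → ℝ) (Zlim : ℝ → ℝ)
    (hcont : ∀ n, ContinuousOn (Z n) (Set.Icc 0 T))
    (hanti : ∀ n, AntitoneOn (Z n) (Set.Icc 0 T))
    (hnonneg : ∀ n, ∀ x ∈ Set.Icc 0 T, 0 ≤ Z n x)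
    (hcontl : ContinuousOn Zlim (Set.Icc 0 T))
    (hantil : AntitoneOn Zlim (Set.Icc 0 T))
    (hnonnegl : ∀ x ∈ Set.Icc 0 T, 0 ≤ Zlim x)
    (hptws : ∀ x ∈ Set.Icc 0 T,
      Tendsto (fun n => Z n x) atTop (nhds (Zlim x))) :
    TendstoUniformlyOn (fun n θ => (1 / θ) * ∫ s in (0:ℝ)..θ, Z n s)
      (fun θ => (1 / θ) * ∫ s in (0:ℝ)..θ, Zlim s) atTop
      (Set.Ioc 0 T) := by
  have hdini := dini2 T hT Z Zlim hanti hcontl hptws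
  rw [Metric.tendstoUniformlyOn_iff] at hdini ⊢
  intro ε hε
  filter_upwards [hdini (ε/2) (by linarith)] with n hn θ hθ
  have hθ0 : 0 < θ := hθ.1
  have hθT : θ ≤ T := hθ.2
  have hsub : Set.Icc 0 θ ⊆ Set.Icc 0 T := Set.Icc_subset_Icc le_rfl hθT
  have hintn : IntervalIntegrable (Z n) MeasureTheory.volume 0 θ :=
    ((hcont n).mono hsub).intervalIntegrable_of_Icc (le_of_lt hθ0)
  have hintl : IntervalIntegrable Zlim MeasureTheory.volume 0 θ :=
    (hcontl.mono hsub).intervalIntegrable_of_Icc (le_of_lt hθ0)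
  rw [Real.dist_eq]
  have key : |∫ s in (0:ℝ)..θ, (Zlim s - Z n s)| ≤ (ε/2) * θ := by
    have := intervalIntegral.norm_integral_le_of_norm_le_const
      (a := 0) (b := θ) (C := ε/2) (f := fun s => Zlim s - Z n s) ?_
    · simpa [abs_of_pos hθ0] using this
    · intro x hx
      rw [Set.uIoc_of_le (le_of_lt hθ0)] at hx
      have hx' : x ∈ Set.Icc 0 T := ⟨le_of_lt hx.1, le_trans hx.2 hθT⟩
      have := hn x hx'
      rw [Real.dist_eq] at this
      simpa [Real.norm_eq_abs] using le_of_lt this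
  have hint : (∫ s in (0:ℝ)..θ, Zlim s) - ∫ s in (0:ℝ)..θ, Z n s
      = ∫ s in (0:ℝ)..θ, (Zlim s - Z n s) :=
    (intervalIntegral.integral_sub hintl hintn).symm
  have : |1/θ * (∫ s in (0:ℝ)..θ, Zlim s) - 1/θ * ∫ s in (0:ℝ)..θ, Z n s|
      = (1/θ) * |∫ s in (0:ℝ)..θ, (Zlim s - Z n s)| := by
    rw [← mul_sub, abs_mul, abs_of_pos (by positivity), hint]
  rw [this]
  calc (1/θ) * |∫ s in (0:ℝ)..θ, (Zlim s - Z n s)| ≤ (1/θ) * ((ε/2) * θ) := by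
        apply mul_le_mul_of_nonneg_left key (by positivity)
  _ = ε/2 := by field_simp
  _ < ε := by linarith
end

section
/- Uniform convergence of g-bundle: suppose Z_n → Z pointwise on [0,T], all functions continuous, antitone, nonnegative, with Z not identically 0 (so μ_T(Z) > 0). Then |g_θ(Z_n) − g_θ(Z)| ≤ (1/μ_T(Z))·|∫_0^{g_θ(Z)} Z_n − ∫_0^{g_θ(Z)} Z| for each admissible θ, and consequently g_θ(Z_n) → g_θ(Z) uniformly over admissible θ. -/
open Filter Set intervalIntegral

open MeasureTheory in
private lemma anti_intble {f : ℝ → ℝ} {T u v : ℝ} (hf : ContinuousOn f (Set.Icc 0 T))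
    (h0 : 0 ≤ u) (huv : u ≤ v) (hvT : v ≤ T) : IntervalIntegrable f volume u v := by
  apply ContinuousOn.intervalIntegrable
  apply hf.mono
  rw [Set.uIcc_of_le huv]
  exact Set.Icc_subset_Icc h0 hvT

private lemma anti_int_upper {f : ℝ → ℝ} {T u v : ℝ} (hf : ContinuousOn f (Set.Icc 0 T))
    (ha : AntitoneOn f (Set.Icc 0 T)) (h0 : 0 ≤ u) (huv : u ≤ v) (hvT : v ≤ T) :
    (∫ s in u..v, f s) ≤ (v - u) * f u := by
  have hmem : u ∈ Set.Icc (0:ℝ) T := ⟨h0, le_trans huv hvT⟩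
  have h1 : (∫ s in u..v, f s) ≤ ∫ _ in u..v, f u := by
    apply intervalIntegral.integral_mono_on huv (anti_intble hf h0 huv hvT)
      (intervalIntegrable_const)
    intro x hx
    exact ha hmem ⟨le_trans h0 hx.1, le_trans hx.2 hvT⟩ hx.1
  simpa using h1

private lemma anti_int_lower {f : ℝ → ℝ} {T u v : ℝ} (hf : ContinuousOn f (Set.Icc 0 T))
    (ha : AntitoneOn f (Set.Icc 0 T)) (h0 : 0 ≤ u) (huv : u ≤ v) (hvT : v ≤ T) :
    (v - u) * f v ≤ ∫ s in u..v, f s := by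
  have hmem : v ∈ Set.Icc (0:ℝ) T := ⟨le_trans h0 huv, hvT⟩
  have h1 : (∫ _ in u..v, f v) ≤ ∫ s in u..v, f s := by
    apply intervalIntegral.integral_mono_on huv intervalIntegrable_const
      (anti_intble hf h0 huv hvT)
    intro x hx
    exact ha ⟨le_trans h0 hx.1, le_trans hx.2 hvT⟩ hmem hx.2
  simpa using h1

private lemma anti_int_nonneg {f : ℝ → ℝ} {T u v : ℝ} (hf : ContinuousOn f (Set.Icc 0 T))
    (hnn : ∀ x ∈ Set.Icc 0 T, 0 ≤ f x) (h0 : 0 ≤ u) (huv : u ≤ v) (hvT : v ≤ T) :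
    0 ≤ ∫ s in u..v, f s := by
  apply intervalIntegral.integral_nonneg huv
  intro x hx
  exact hnn x ⟨le_trans h0 hx.1, le_trans hx.2 hvT⟩

set_option maxHeartbeats 1600000 in
theorem g_bundle_uniform_convergence
    (T : ℝ) (hT : 0 < T) (Z : ℕ → ℝ → ℝ) (Zlim : ℝ → ℝ)
    (hcont : ∀ n, ContinuousOn (Z n) (Set.Icc 0 T))
    (hanti : ∀ n, AntitoneOn (Z n) (Set.Icc 0 T))
    (hnonneg : ∀ n, ∀ x ∈ Set.Icc 0 T, 0 ≤ Z n x)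
    (hcontl : ContinuousOn Zlim (Set.Icc 0 T))
    (hantil : AntitoneOn Zlim (Set.Icc 0 T))
    (hnonnegl : ∀ x ∈ Set.Icc 0 T, 0 ≤ Zlim x)
    (hptws : ∀ x ∈ Set.Icc 0 T,
      Tendsto (fun n => Z n x) atTop (nhds (Zlim x)))
    (hμT : 0 < (1 / T) * ∫ s in (0:ℝ)..T, Zlim s)
    (A : Set ℝ) (hA : A ⊆ Set.Ioi 0)
    (gZ : ℝ → ℝ) (gZn : ℕ → ℝ → ℝ)
    (hgZmem : ∀ θ ∈ A, gZ θ ∈ Set.Ioc 0 T)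
    (hgZnmem : ∀ n, ∀ θ ∈ A, gZn n θ ∈ Set.Ioc 0 T)
    (hgZ : ∀ θ ∈ A, (∫ s in (0:ℝ)..(gZ θ), Zlim s) = θ * (gZ θ) ^ 2)
    (hgZn : ∀ n, ∀ θ ∈ A,
      (∫ s in (0:ℝ)..(gZn n θ), Z n s) = θ * (gZn n θ) ^ 2) :
    (∀ n, ∀ θ ∈ A,
      |gZn n θ - gZ θ| ≤ (1 / ((1 / T) * ∫ s in (0:ℝ)..T, Zlim s)) *
        |(∫ s in (0:ℝ)..(gZ θ), Z n s) - ∫ s in (0:ℝ)..(gZ θ), Zlim s|) ∧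
      TendstoUniformlyOn gZn gZ atTop A := by
  set μ : ℝ := (1 / T) * ∫ s in (0:ℝ)..T, Zlim s with hμdef
  -- Main pointwise inequality
  have key : ∀ n, ∀ θ ∈ A,
      |gZn n θ - gZ θ| ≤ (1 / μ) *
        |(∫ s in (0:ℝ)..(gZ θ), Z n s) - ∫ s in (0:ℝ)..(gZ θ), Zlim s| := by
    intro n θ hθ
    have hθpos : (0:ℝ) < θ := hA hθ
    obtain ⟨ha0, haT⟩ := hgZmem θ hθ
    obtain ⟨hb0, hbT⟩ := hgZnmem n θ hθ
    set a := gZ θ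
    set b := gZn n θ
    set D : ℝ := (∫ s in (0:ℝ)..a, Z n s) - ∫ s in (0:ℝ)..a, Zlim s with hD
    -- Step 1 : μ ≤ θ * a
    have hstep1 : μ ≤ θ * a := by
      have hsplit : (∫ s in (0:ℝ)..a, Zlim s) + (∫ s in a..T, Zlim s)
          = ∫ s in (0:ℝ)..T, Zlim s :=
        intervalIntegral.integral_add_adjacent_intervals
          (anti_intble hcontl le_rfl ha0.le haT) (anti_intble hcontl ha0.le haT le_rfl)
      have h1 : (∫ s in a..T, Zlim s) ≤ (T - a) * Zlim a :=
        anti_int_upper hcontl hantil ha0.le haT le_rfl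
      have h2 : a * Zlim a ≤ ∫ s in (0:ℝ)..a, Zlim s := by
        have := anti_int_lower hcontl hantil le_rfl ha0.le haT
        simpa using this
      have h3 : θ * a ^ 2 = ∫ s in (0:ℝ)..a, Zlim s := (hgZ θ hθ).symm
      rw [hμdef, div_mul_eq_mul_div, one_mul, div_le_iff₀ hT]
      nlinarith [h1, h2, h3, ha0, haT, hT]
    -- Step 2 : μ * |b - a| ≤ |D|
    have hstep2 : μ * |b - a| ≤ |D| := by
      rcases le_or_gt b a with hba | hab
      · -- b ≤ a : D ≤ -θ a (a - b)
        have hsplit : (∫ s in (0:ℝ)..b, Z n s) + (∫ s in b..a, Z n s)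
            = ∫ s in (0:ℝ)..a, Z n s :=
          intervalIntegral.integral_add_adjacent_intervals
            (anti_intble (hcont n) le_rfl hb0.le (le_trans hba haT))
            (anti_intble (hcont n) hb0.le hba haT)
        have h1 : (∫ s in b..a, Z n s) ≤ (a - b) * Z n b :=
          anti_int_upper (hcont n) (hanti n) hb0.le hba haT
        have h2 : b * Z n b ≤ ∫ s in (0:ℝ)..b, Z n s := by
          have := anti_int_lower (hcont n) (hanti n) le_rfl hb0.le (le_trans hba haT)
          simpa using this
        have h3 : (∫ s in (0:ℝ)..b, Z n s) = θ * b ^ 2 := hgZn n θ hθ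
        have h4 : (∫ s in (0:ℝ)..a, Zlim s) = θ * a ^ 2 := hgZ θ hθ
        have hZnb : Z n b ≤ θ * b := by
          rw [h3] at h2
          nlinarith [hb0]
        have hDle : D ≤ -(θ * a * (a - b)) := by
          rw [hD, h4, ← hsplit, h3]
          nlinarith [h1, hZnb, hb0, hba]
        have habs : |b - a| = a - b := by rw [abs_sub_comm]; exact abs_of_nonneg (by linarith)
        calc μ * |b - a| ≤ (θ * a) * (a - b) := by
              rw [habs]
              exact mul_le_mul_of_nonneg_right hstep1 (by linarith)
          _ ≤ -D := by linarith [hDle]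
          _ ≤ |D| := neg_le_abs D
      · -- a < b : D ≥ θ a (b - a)
        have hsplit : (∫ s in (0:ℝ)..a, Z n s) + (∫ s in a..b, Z n s)
            = ∫ s in (0:ℝ)..b, Z n s :=
          intervalIntegral.integral_add_adjacent_intervals
            (anti_intble (hcont n) le_rfl ha0.le (le_trans haT le_rfl))
            (anti_intble (hcont n) ha0.le hab.le hbT)
        have h1 : (∫ s in a..b, Z n s) ≤ (b - a) * Z n a :=
          anti_int_upper (hcont n) (hanti n) ha0.le hab.le hbT
        have h2 : a * Z n a ≤ ∫ s in (0:ℝ)..a, Z n s := by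
          have := anti_int_lower (hcont n) (hanti n) le_rfl ha0.le haT
          simpa using this
        have h3 : (∫ s in (0:ℝ)..b, Z n s) = θ * b ^ 2 := hgZn n θ hθ
        have h4 : (∫ s in (0:ℝ)..a, Zlim s) = θ * a ^ 2 := hgZ θ hθ
        -- a * ∫_a^b ≤ (b-a) * ∫_0^a
        have h5 : a * (∫ s in a..b, Z n s) ≤ (b - a) * ∫ s in (0:ℝ)..a, Z n s := by
          have hZna : 0 ≤ Z n a := hnonneg n a ⟨ha0.le, haT⟩
          nlinarith [h1, h2, hab.le, ha0]
        -- hence b * ∫_a^b ≤ (b-a) * θ b², so ∫_a^b ≤ (b-a) θ b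
        have h6 : (∫ s in a..b, Z n s) ≤ (b - a) * (θ * b) := by
          have hIb : (∫ s in (0:ℝ)..a, Z n s) = θ * b ^ 2 - ∫ s in a..b, Z n s := by
            rw [← h3, ← hsplit]; ring
          rw [hIb] at h5
          nlinarith [hb0]
        have hDge : θ * a * (b - a) ≤ D := by
          rw [hD, h4]
          nlinarith [h6, hsplit, h3]
        have habs : |b - a| = b - a := abs_of_nonneg (by linarith)
        calc μ * |b - a| ≤ (θ * a) * (b - a) := by
              rw [habs]
              exact mul_le_mul_of_nonneg_right hstep1 (by linarith)
          _ ≤ D := hDge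
          _ ≤ |D| := le_abs_self D
    -- conclude
    rw [div_mul_eq_mul_div, one_mul, le_div_iff₀ hμT, mul_comm]
    exact hstep2
  refine ⟨key, ?_⟩
  -- Uniform convergence part
  -- bound on Z n : get C with ∀ n, Z n 0 ≤ C
  have h00 : (0:ℝ) ∈ Set.Icc (0:ℝ) T := ⟨le_rfl, hT.le⟩
  obtain ⟨C, hC⟩ := (hptws 0 h00).bddAbove_range
  have hCb : ∀ n, ∀ x ∈ Set.Icc (0:ℝ) T, Z n x ≤ C := by
    intro n x hx
    exact le_trans ((hanti n) h00 hx hx.1) (hC ⟨n, rfl⟩)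
  -- pointwise convergence of the integrals
  have hint : ∀ c ∈ Set.Icc (0:ℝ) T,
      Tendsto (fun n => ∫ s in (0:ℝ)..c, Z n s) atTop
        (nhds (∫ s in (0:ℝ)..c, Zlim s)) := by
    intro c hc
    apply intervalIntegral.tendsto_integral_filter_of_dominated_convergence (fun _ => C)
    · apply Filter.Eventually.of_forall
      intro n
      have : Set.uIoc (0:ℝ) c ⊆ Set.Icc 0 T := by
        rw [Set.uIoc_of_le hc.1]
        exact subset_trans Set.Ioc_subset_Icc_self (Set.Icc_subset_Icc le_rfl hc.2)
      exact ((hcont n).mono this).aestronglyMeasurable measurableSet_uIoc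
    · apply Filter.Eventually.of_forall
      intro n
      apply MeasureTheory.ae_of_all
      intro x hx
      have hx' : x ∈ Set.Icc (0:ℝ) T := by
        rw [Set.uIoc_of_le hc.1] at hx
        exact ⟨hx.1.le, le_trans hx.2 hc.2⟩
      rw [Real.norm_eq_abs, abs_of_nonneg (hnonneg n x hx')]
      exact hCb n x hx'
    · exact intervalIntegrable_const
    · apply MeasureTheory.ae_of_all
      intro x hx
      have hx' : x ∈ Set.Icc (0:ℝ) T := by
        rw [Set.uIoc_of_le hc.1] at hx
        exact ⟨hx.1.le, le_trans hx.2 hc.2⟩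
      exact hptws x hx'
  -- uniform convergence of the integrals over [0,T]
  have hunif : ∀ δ > (0:ℝ), ∀ᶠ n in atTop, ∀ c ∈ Set.Icc (0:ℝ) T,
      |(∫ s in (0:ℝ)..c, Z n s) - ∫ s in (0:ℝ)..c, Zlim s| < δ := by
    intro δ hδ
    -- Lipschitz constant for the limit integral
    set C' : ℝ := Zlim 0
    have hC'0 : 0 ≤ C' := hnonnegl 0 h00
    obtain ⟨k, hk⟩ := exists_nat_gt (T * (C' + 1) * 4 / δ)
    have hkpos : 0 < (k:ℝ) := lt_of_le_of_lt (by positivity) hk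
    have hk1 : 1 ≤ k := by exact_mod_cast hkpos
    set t : ℕ → ℝ := fun i => (i : ℝ) * T / k with ht
    have htmem : ∀ i ≤ k, t i ∈ Set.Icc (0:ℝ) T := by
      intro i hi
      constructor
      · positivity
      · simp only [ht]
        rw [div_le_iff₀ hkpos]
        have : (i:ℝ) ≤ k := by exact_mod_cast hi
        nlinarith
    have hmesh : ∀ i, t (i+1) - t i = T / k := by
      intro i; simp only [ht]; push_cast; field_simp; ring
    have hmeshδ : T / k * (C' + 1) < δ / 4 := by
      have hkk : T * (C' + 1) * 4 < k * δ := by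
        have := (div_lt_iff₀ hδ).mp hk
        linarith
      rw [div_mul_eq_mul_div, div_lt_iff₀ hkpos]
      nlinarith
    -- monotonicity and Lipschitz facts
    have hGmono : ∀ n, ∀ u v, 0 ≤ u → u ≤ v → v ≤ T →
        (∫ s in (0:ℝ)..u, Z n s) ≤ ∫ s in (0:ℝ)..v, Z n s := by
      intro n u v h0 huv hvT
      have hsplit := intervalIntegral.integral_add_adjacent_intervals
        (anti_intble (hcont n) le_rfl h0 (huv.trans hvT)) (anti_intble (hcont n) h0 huv hvT)
      have := anti_int_nonneg (hcont n) (hnonneg n) h0 huv hvT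
      linarith
    have hGlip : ∀ u v, 0 ≤ u → u ≤ v → v ≤ T →
        (∫ s in (0:ℝ)..u, Zlim s) ≤ (∫ s in (0:ℝ)..v, Zlim s) ∧
        (∫ s in (0:ℝ)..v, Zlim s) - (∫ s in (0:ℝ)..u, Zlim s) ≤ (v - u) * C' := by
      intro u v h0 huv hvT
      have hsplit := intervalIntegral.integral_add_adjacent_intervals
        (anti_intble hcontl le_rfl h0 (huv.trans hvT)) (anti_intble hcontl h0 huv hvT)
      have hnn := anti_int_nonneg hcontl hnonnegl h0 huv hvT
      have hup : (∫ s in u..v, Zlim s) ≤ (v - u) * Zlim u :=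
        anti_int_upper hcontl hantil h0 huv hvT
      have hZu : Zlim u ≤ C' := hantil h00 ⟨h0, huv.trans hvT⟩ h0
      constructor
      · linarith
      · nlinarith [huv]
    -- eventual closeness at the grid points
    have hfin : ∀ᶠ n in atTop, ∀ i ∈ Finset.range (k+1),
        |(∫ s in (0:ℝ)..(t i), Z n s) - ∫ s in (0:ℝ)..(t i), Zlim s| < δ/4 := by
      rw [Filter.eventually_all_finset]
      intro i hi
      have hti := htmem i (Nat.lt_succ_iff.mp (Finset.mem_range.mp hi))
      have h1 := Metric.tendsto_nhds.mp (hint (t i) hti) (δ/4) (by linarith)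
      filter_upwards [h1] with n hn
      simpa [Real.dist_eq] using hn
    have hcell : ∀ c ∈ Set.Icc (0:ℝ) T, ∃ i : ℕ, i + 1 ≤ k ∧ t i ≤ c ∧ c ≤ t (i + 1) := by
      intro c hc
      have hckT : 0 ≤ c * k / T := div_nonneg (mul_nonneg hc.1 hkpos.le) hT.le
      rcases le_or_gt (Nat.floor (c * k / T)) (k - 1) with h | h
      · refine ⟨Nat.floor (c * k / T), by omega, ?_, ?_⟩
        · have hfl : ((Nat.floor (c * k / T) : ℕ) : ℝ) ≤ c * k / T := Nat.floor_le hckT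
          simp only [ht]
          rw [div_le_iff₀ hkpos]
          rw [le_div_iff₀ hT] at hfl
          nlinarith
        · have hfl : c * k / T < (Nat.floor (c * k / T) : ℝ) + 1 := Nat.lt_floor_add_one _
          simp only [ht]
          rw [le_div_iff₀ hkpos]
          rw [div_lt_iff₀ hT] at hfl
          push_cast
          nlinarith
      · refine ⟨k - 1, by omega, ?_, ?_⟩
        · have hck : ((k:ℕ):ℝ) ≤ c * k / T := (Nat.le_floor_iff hckT).mp (by omega)
          have hcT : T ≤ c := by
            rw [le_div_iff₀ hT] at hck
            nlinarith
          simp only [ht]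
          have hcast : ((k - 1 : ℕ) : ℝ) = (k:ℝ) - 1 := by
            push_cast [Nat.cast_sub hk1]; ring
          rw [hcast, div_le_iff₀ hkpos]
          nlinarith
        · have hkk : k - 1 + 1 = k := by omega
          simp only [ht, hkk]
          rw [mul_comm, mul_div_assoc, div_self (ne_of_gt hkpos), mul_one]
          exact hc.2
    filter_upwards [hfin] with n hn c hc
    obtain ⟨i, hik1, hlo, hhi⟩ := hcell c hc
    have hikk : i ≤ k := by omega
    have hti := htmem i hikk
    have hti1 := htmem (i+1) hik1
    have e1 := hn i (Finset.mem_range.mpr (by omega))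
    have e2 := hn (i+1) (Finset.mem_range.mpr (by omega))
    obtain ⟨e1a, e1b⟩ := abs_lt.mp e1
    obtain ⟨e2a, e2b⟩ := abs_lt.mp e2
    -- Lipschitz bound on the cell
    obtain ⟨e3a, e3b⟩ := hGlip (t i) (t (i+1)) hti.1 (hlo.trans hhi) hti1.2
    have hmesh' : t (i+1) - t i = T / k := hmesh i
    have e3c : (∫ s in (0:ℝ)..(t (i+1)), Zlim s) - (∫ s in (0:ℝ)..(t i), Zlim s) < δ/4 := by
      rw [hmesh'] at e3b
      have : T / k * C' ≤ T / k * (C' + 1) := by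
        apply mul_le_mul_of_nonneg_left (by linarith) (by positivity)
      linarith
    -- monotone enclosure
    have m1 : (∫ s in (0:ℝ)..(t i), Z n s) ≤ ∫ s in (0:ℝ)..c, Z n s :=
      hGmono n (t i) c hti.1 hlo hc.2
    have m2 : (∫ s in (0:ℝ)..c, Z n s) ≤ ∫ s in (0:ℝ)..(t (i+1)), Z n s :=
      hGmono n c (t (i+1)) hc.1 hhi hti1.2
    have m3 : (∫ s in (0:ℝ)..(t i), Zlim s) ≤ ∫ s in (0:ℝ)..c, Zlim s :=
      (hGlip (t i) c hti.1 hlo hc.2).1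
    have m4 : (∫ s in (0:ℝ)..c, Zlim s) ≤ ∫ s in (0:ℝ)..(t (i+1)), Zlim s :=
      (hGlip c (t (i+1)) hc.1 hhi hti1.2).1
    rw [abs_lt]
    constructor <;> linarith
  -- conclude uniform convergence
  rw [Metric.tendstoUniformlyOn_iff]
  intro ε hε
  have hδ : 0 < μ * ε / 2 := by positivity
  filter_upwards [hunif (μ * ε / 2) hδ] with n hn θ hθ
  have h1 := key n θ hθ
  have h2 := hn (gZ θ) ⟨(hgZmem θ hθ).1.le, (hgZmem θ hθ).2⟩
  rw [Real.dist_eq, abs_sub_comm]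
  calc |gZn n θ - gZ θ| ≤ (1 / μ) * |(∫ s in (0:ℝ)..(gZ θ), Z n s) - ∫ s in (0:ℝ)..(gZ θ), Zlim s| := h1
    _ ≤ (1 / μ) * (μ * ε / 2) := by
        apply mul_le_mul_of_nonneg_left h2.le (by positivity)
    _ = ε / 2 := by field_simp
    _ < ε := by linarith
end

section
/- Uniform convergence of R-bundle: suppose Z_n → Z uniformly on [0,T], all functions continuous, antitone, nonnegative, and suppose θ₀ = inf of the admissible θ is strictly positive. Then, with R_θ(Y)² = ∫_0^{h_θ(Y)} Y(s)ds, the convergence R_θ(Z_n)² → R_θ(Z)² is uniform over admissible θ ≥ θ₀. -/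
open Filter Set intervalIntegral

theorem R_bundle_uniform_convergence
    (T : ℝ) (hT : 0 < T) (θ₀ : ℝ) (hθ₀ : 0 < θ₀)
    (Z : ℕ → ℝ → ℝ) (Zlim : ℝ → ℝ)
    (hcont : ∀ n, ContinuousOn (Z n) (Set.Icc 0 T))
    (hanti : ∀ n, AntitoneOn (Z n) (Set.Icc 0 T))
    (hnonneg : ∀ n, ∀ x ∈ Set.Icc 0 T, 0 ≤ Z n x)
    (hcontl : ContinuousOn Zlim (Set.Icc 0 T))
    (hantil : AntitoneOn Zlim (Set.Icc 0 T))
    (hnonnegl : ∀ x ∈ Set.Icc 0 T, 0 ≤ Zlim x)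
    (hunif : TendstoUniformlyOn Z Zlim atTop (Set.Icc 0 T))
    (A : Set ℝ) (hA : A ⊆ Set.Ici θ₀)
    (hZ : ℝ → ℝ) (hZn : ℕ → ℝ → ℝ)
    (hmem : ∀ θ ∈ A, hZ θ ∈ Set.Icc 0 T)
    (hmemn : ∀ n, ∀ θ ∈ A, hZn n θ ∈ Set.Icc 0 T)
    (heq : ∀ θ ∈ A, Zlim (hZ θ) = θ * hZ θ)
    (heqn : ∀ n, ∀ θ ∈ A, Z n (hZn n θ) = θ * hZn n θ) :
    TendstoUniformlyOn (fun n θ => ∫ s in (0:ℝ)..(hZn n θ), Z n s)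
      (fun θ => ∫ s in (0:ℝ)..(hZ θ), Zlim s) atTop A := by
  rw [Metric.tendstoUniformlyOn_iff]
  intro ε hε
  have hZlim0 : 0 ≤ Zlim 0 := hnonnegl 0 ⟨le_refl 0, hT.le⟩
  set M : ℝ := Zlim 0 + 1 with hM
  have hMpos : 0 < M := by positivity
  set C : ℝ := T + M / θ₀ + 1 with hC
  have hCpos : 0 < C := by positivity
  set δ : ℝ := min 1 (ε / C) with hδ
  have hδpos : 0 < δ := lt_min one_pos (div_pos hε hCpos)
  have hδ1 : δ ≤ 1 := min_le_left _ _
  have hδε : δ * (T + M / θ₀) < ε := by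
    calc δ * (T + M / θ₀) ≤ (ε / C) * (T + M / θ₀) :=
          mul_le_mul_of_nonneg_right (min_le_right _ _) (by positivity)
      _ < (ε / C) * C := by
          apply mul_lt_mul_of_pos_left _ (div_pos hε hCpos)
          rw [hC]; linarith
      _ = ε := div_mul_cancel₀ _ hCpos.ne'
  rw [Metric.tendstoUniformlyOn_iff] at hunif
  filter_upwards [hunif δ hδpos] with n hn θ hθ
  have haI := hmem θ hθ
  have hbI := hmemn n θ hθ
  have hθ0 : θ₀ ≤ θ := hA hθ
  set a : ℝ := hZ θ with ha
  set b : ℝ := hZn n θ with hb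
  have hsub : ∀ x ∈ Set.Icc (0:ℝ) T, |Z n x - Zlim x| ≤ δ := by
    intro x hx
    have := hn x hx
    rw [Real.dist_eq] at this
    rw [abs_sub_comm]
    exact this.le
  have hbound : ∀ x ∈ Set.Icc (0:ℝ) T, |Z n x| ≤ M := by
    intro x hx
    have h1 := abs_le.1 (hsub x hx)
    have h2 := hnonneg n x hx
    have h3 : Zlim x ≤ Zlim 0 := hantil ⟨le_refl 0, hT.le⟩ hx hx.1
    rw [abs_of_nonneg h2]
    rw [hM]; linarith [h1.2]
  -- distance between the h's
  have hab : θ₀ * |b - a| ≤ δ := by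
    have e1 : Z n b = θ * b := heqn n θ hθ
    have e2 : Zlim a = θ * a := heq θ hθ
    have h4 := abs_le.1 (hsub b hbI)
    rcases le_total a b with h | h
    · rw [abs_of_nonneg (sub_nonneg.2 h)]
      have h3 : Zlim b ≤ Zlim a := hantil haI hbI h
      have key : θ * (b - a) ≤ δ := by
        rw [mul_sub, ← e1, ← e2]; linarith [h4.2]
      have h5 : θ₀ * (b - a) ≤ θ * (b - a) :=
        mul_le_mul_of_nonneg_right hθ0 (sub_nonneg.2 h)
      linarith
    · rw [abs_of_nonpos (sub_nonpos.2 h)]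
      have h3 : Zlim a ≤ Zlim b := hantil hbI haI h
      have key : θ * (a - b) ≤ δ := by
        rw [mul_sub, ← e1, ← e2]; linarith [h4.1]
      have h5 : θ₀ * (a - b) ≤ θ * (a - b) :=
        mul_le_mul_of_nonneg_right hθ0 (sub_nonneg.2 h)
      have : -(b - a) = a - b := by ring
      rw [this]; linarith
  have habδ : |b - a| ≤ δ / θ₀ := by
    rw [le_div_iff₀ hθ₀]
    nlinarith [abs_nonneg (b - a)]
  -- integrability
  have hsubI1 : Set.uIcc (0:ℝ) a ⊆ Set.Icc 0 T := by
    rw [Set.uIcc_of_le haI.1]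
    exact Set.Icc_subset_Icc le_rfl haI.2
  have hsubI2 : Set.uIcc a b ⊆ Set.Icc (0:ℝ) T :=
    (Set.ordConnected_Icc).uIcc_subset haI hbI
  have hi1 : IntervalIntegrable (Z n) MeasureTheory.volume 0 a :=
    ((hcont n).mono hsubI1).intervalIntegrable
  have hi2 : IntervalIntegrable (Z n) MeasureTheory.volume a b :=
    ((hcont n).mono hsubI2).intervalIntegrable
  have hil : IntervalIntegrable Zlim MeasureTheory.volume 0 a :=
    (hcontl.mono hsubI1).intervalIntegrable
  have hsplit : (∫ s in (0:ℝ)..b, Z n s)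
      = (∫ s in (0:ℝ)..a, Z n s) + ∫ s in a..b, Z n s :=
    (intervalIntegral.integral_add_adjacent_intervals hi1 hi2).symm
  rw [Real.dist_eq, hsplit]
  have est1 : |(∫ s in (0:ℝ)..a, Zlim s) - ∫ s in (0:ℝ)..a, Z n s| ≤ δ * T := by
    rw [← intervalIntegral.integral_sub hil hi1]
    have := intervalIntegral.norm_integral_le_of_norm_le_const
      (C := δ) (f := fun s => Zlim s - Z n s) (a := (0:ℝ)) (b := a) ?_
    · rw [Real.norm_eq_abs] at this
      calc |∫ s in (0:ℝ)..a, (Zlim s - Z n s)| ≤ δ * |a - 0| := this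
        _ ≤ δ * T := by
            apply mul_le_mul_of_nonneg_left _ hδpos.le
            rw [sub_zero, abs_of_nonneg haI.1]; exact haI.2
    · intro x hx
      have hx' : x ∈ Set.Icc (0:ℝ) T := hsubI1 (Set.uIoc_subset_uIcc hx)
      rw [Real.norm_eq_abs, abs_sub_comm]
      exact hsub x hx'
  have est2 : |∫ s in a..b, Z n s| ≤ M * (δ / θ₀) := by
    have := intervalIntegral.norm_integral_le_of_norm_le_const
      (C := M) (f := Z n) (a := a) (b := b) ?_
    · rw [Real.norm_eq_abs] at this
      calc |∫ s in a..b, Z n s| ≤ M * |b - a| := this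
        _ ≤ M * (δ / θ₀) := mul_le_mul_of_nonneg_left habδ hMpos.le
    · intro x hx
      have hx' : x ∈ Set.Icc (0:ℝ) T := hsubI2 (Set.uIoc_subset_uIcc hx)
      rw [Real.norm_eq_abs]
      exact hbound x hx'
  calc |(∫ s in (0:ℝ)..a, Zlim s) - ((∫ s in (0:ℝ)..a, Z n s) + ∫ s in a..b, Z n s)|
      = |((∫ s in (0:ℝ)..a, Zlim s) - ∫ s in (0:ℝ)..a, Z n s) + (-(∫ s in a..b, Z n s))| := by
        ring_nf
    _ ≤ |(∫ s in (0:ℝ)..a, Zlim s) - ∫ s in (0:ℝ)..a, Z n s| + |(-(∫ s in a..b, Z n s))| :=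
        abs_add_le _ _
    _ = |(∫ s in (0:ℝ)..a, Zlim s) - ∫ s in (0:ℝ)..a, Z n s| + |∫ s in a..b, Z n s| := by
        rw [abs_neg]
    _ ≤ δ * T + M * (δ / θ₀) := add_le_add est1 est2
    _ = δ * (T + M / θ₀) := by ring
    _ < ε := hδε
end
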